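/- In the IRL1 setting, assume additionally that the level set {x : F(x) ≤ F(x^0, ε^0)} is bounded, where F(x) = f(x) + λ Σ_{i=1}^n |x_i|^p. Then for every k ∈ ℕ, F(x^0, ε^0) − F(x^k, ε^k) ≥ (M − L_f/2)·Σ_{t=0}^{k−1} ‖x^{t+1} − x^t‖², the series Σ_{t=0}^∞ ‖x^{t+1} − x^t‖² converges, and ‖x^{k+1} − x^k‖ → 0 as k → ∞. -/

import Mathlib

/-!
Each step lowers `F(x, ε)` by at least `(M - Lf/2)‖x^{k+1} - x^k‖²`. The descent lemma for `f`
and the first-order inequality of the `M`-strongly convex `Q_k` at `x^k`, where `∇Q_k = ∇f`, give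
`f(x^{k+1}) - f(x^k) ≤ Q_k(x^{k+1}) - Q_k(x^k) - (M - Lf)/2 ‖x^{k+1} - x^k‖²`. Quadratic growth of
the `M`-strongly convex `G_k` at its minimizer `x^{k+1}` bounds `Q_k(x^{k+1}) - Q_k(x^k)` by the
decrease of the weighted `ℓ₁` term minus `M/2 ‖x^{k+1} - x^k‖²`. Since the weights are the
derivatives of `u ↦ u^p` at `|x_i^k| + ε_i^k`, concavity and `ε^{k+1} ≤ ε^k` bound the increase of
the penalty by exactly that weighted `ℓ₁` difference. Telescoping gives the first claim.
Along the iterates `F(x^k) ≤ F(x^k, ε^k) ≤ F(x⁰, ε⁰)`, so they stay in the bounded level set, where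
the continuous `f`, hence `F(x^k, ε^k)`, is bounded below; so the partial sums of the series are
bounded.
-/


open Filter Topology

/-- The weight function `w(t, s) = p(|t| + s)^(p-1)`. -/
noncomputable def wfun (p t s : ℝ) : ℝ := p * (|t| + s) ^ (p - 1)

/-- The IRL1 setting (Algorithm 2.1 of the paper): fixed data `p ∈ (0,1)`, `λ > 0`,
`μ ∈ (0,1)`, a differentiable `f` with `Lf`-Lipschitz gradient (`Lf ≥ 0`), iterates
`x^k`, positive parameters `ε^k` with `ε^{k+1} ≤ μ ε^k` componentwise, and for each `k`
a differentiable model `Q_k` with `∇Q_k(x^k) = ∇f(x^k)`, `M`-strongly convex with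
`M > Lf/2` (strong convexity meaning `z ↦ Q_k z - (M/2)‖z‖²` is convex), `∇Q_k`
`L`-Lipschitz, such that `x^{k+1}` is a global minimizer of
`G(·; x^k, ε^k) = Q_k(·) + λ Σᵢ w(xᵢ^k, εᵢ^k)|·ᵢ|`. -/
structure IRL1 (n : ℕ) where
  p : ℝ
  lam : ℝ
  mu : ℝ
  Lf : ℝ
  M : ℝ
  L : ℝ
  f : EuclideanSpace ℝ (Fin n) → ℝ
  x : ℕ → EuclideanSpace ℝ (Fin n)
  eps : ℕ → Fin n → ℝ
  Q : ℕ → EuclideanSpace ℝ (Fin n) → ℝ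
  hp0 : 0 < p
  hp1 : p < 1
  hlam : 0 < lam
  hmu0 : 0 < mu
  hmu1 : mu < 1
  hLf : 0 ≤ Lf
  hM : Lf / 2 < M
  hf_diff : Differentiable ℝ f
  hf_lip : ∀ a b, ‖gradient f a - gradient f b‖ ≤ Lf * ‖a - b‖
  heps_pos : ∀ k i, 0 < eps k i
  heps_dec : ∀ k i, eps (k + 1) i ≤ mu * eps k i
  hQ_diff : ∀ k, Differentiable ℝ (Q k)
  hQ_grad : ∀ k, gradient (Q k) (x k) = gradient f (x k)
  hQ_sconv : ∀ k, ConvexOn ℝ Set.univ (fun z => Q k z - M / 2 * ‖z‖ ^ 2)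
  hQ_lip : ∀ k a b, ‖gradient (Q k) a - gradient (Q k) b‖ ≤ L * ‖a - b‖
  hmin : ∀ k, ∀ z : EuclideanSpace ℝ (Fin n),
    Q k (x (k + 1)) + lam * ∑ i, wfun p (x k i) (eps k i) * |x (k + 1) i|
      ≤ Q k z + lam * ∑ i, wfun p (x k i) (eps k i) * |z i|

/-- The smoothed objective `F(x, ε) = f(x) + λ Σᵢ (|xᵢ| + εᵢ)^p`. -/
noncomputable def IRL1.Feps {n : ℕ} (S : IRL1 n)
    (z : EuclideanSpace ℝ (Fin n)) (e : Fin n → ℝ) : ℝ :=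
  S.f z + S.lam * ∑ i, (|z i| + e i) ^ S.p

/-- The objective `F(x) = f(x) + λ Σᵢ |xᵢ|^p`. -/
noncomputable def IRL1.Fobj {n : ℕ} (S : IRL1 n) (z : EuclideanSpace ℝ (Fin n)) : ℝ :=
  S.f z + S.lam * ∑ i, |z i| ^ S.p

/-- The subproblem objective `G(z; x^k, ε^k)`. -/
noncomputable def IRL1.G {n : ℕ} (S : IRL1 n) (k : ℕ)
    (z : EuclideanSpace ℝ (Fin n)) : ℝ :=
  S.Q k z + S.lam * ∑ i, wfun S.p (S.x k i) (S.eps k i) * |z i|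

/-- The level set `{x : F(x) ≤ F(x⁰, ε⁰)}` is bounded. -/
def IRL1.LevelBounded {n : ℕ} (S : IRL1 n) : Prop :=
  Bornology.IsBounded {z : EuclideanSpace ℝ (Fin n) | S.Fobj z ≤ S.Feps (S.x 0) (S.eps 0)}


open RealInnerProductSpace

section InnerProductSpace

variable {E : Type*} [NormedAddCommGroup E] [InnerProductSpace ℝ E]

lemma StrongConvexOn.slope_add_le {G : E → ℝ} {m : ℝ} (hG : StrongConvexOn Set.univ m G)
    (a b : E) {t : ℝ} (ht₀ : 0 < t) (ht₁ : t ≤ 1) :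
    (G (a + t • (b - a)) - G a) / t + (1 - t) * (m / 2 * ‖b - a‖ ^ 2) ≤ G b - G a := by
  have h := hG.2 (Set.mem_univ a) (Set.mem_univ b) (sub_nonneg.2 ht₁) ht₀.le
    (sub_add_cancel 1 t)
  rw [show (1 - t) • a + t • b = a + t • (b - a) by module, norm_sub_rev] at h
  simp only [smul_eq_mul] at h
  rw [div_add' _ _ _ ht₀.ne', div_le_iff₀ ht₀]
  linarith

lemma StrongConvexOn.add_sq_norm_sub_le_of_isMinOn {G : E → ℝ} {m : ℝ}
    (hG : StrongConvexOn Set.univ m G) {a : E} (ha : IsMinOn G Set.univ a) (b : E) :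
    G a + m / 2 * ‖b - a‖ ^ 2 ≤ G b := by
  have hlim : Tendsto (fun t : ℝ => (1 - t) * (m / 2 * ‖b - a‖ ^ 2)) (𝓝[>] 0)
      (𝓝 (m / 2 * ‖b - a‖ ^ 2)) :=
    tendsto_nhdsWithin_of_tendsto_nhds <|
      (by fun_prop : Continuous fun t : ℝ => (1 - t) * (m / 2 * ‖b - a‖ ^ 2)).tendsto' 0 _
        (by simp)
  have hbound : ∀ᶠ t in 𝓝[>] (0 : ℝ), (1 - t) * (m / 2 * ‖b - a‖ ^ 2) ≤ G b - G a := by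
    filter_upwards [Ioc_mem_nhdsGT one_pos] with t ht
    have hslope : 0 ≤ (G (a + t • (b - a)) - G a) / t :=
      div_nonneg (sub_nonneg.2 (ha (Set.mem_univ _))) ht.1.le
    linarith [hG.slope_add_le a b ht.1 ht.2]
  linarith [le_of_tendsto hlim hbound]

variable [CompleteSpace E]

lemma DifferentiableAt.hasDerivAt_comp_add_smul {f : E → ℝ} {a d : E} {t : ℝ}
    (hf : DifferentiableAt ℝ f (a + t • d)) :
    HasDerivAt (fun s : ℝ => f (a + s • d)) ⟪gradient f (a + t • d), d⟫ t := by
  have hline : HasDerivAt (fun s : ℝ => a + s • d) d t := by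
    simpa using ((hasDerivAt_id t).smul_const d).const_add a
  have h : HasDerivAt (fun s : ℝ => f (a + s • d)) (fderiv ℝ f (a + t • d) d) t :=
    hf.hasFDerivAt.comp_hasDerivAt t hline
  rwa [← inner_gradient_left] at h

lemma StrongConvexOn.inner_gradient_le {Q : E → ℝ} {m : ℝ} (hQ : StrongConvexOn Set.univ m Q)
    {a : E} (hd : DifferentiableAt ℝ Q a) (b : E) :
    ⟪gradient Q a, b - a⟫ ≤ Q b - Q a - m / 2 * ‖b - a‖ ^ 2 := by
  have hderiv : HasDerivAt (fun t : ℝ => Q (a + t • (b - a))) ⟪gradient Q a, b - a⟫ 0 := by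
    have := DifferentiableAt.hasDerivAt_comp_add_smul (d := b - a) (t := 0)
      (by rwa [zero_smul, add_zero])
    rwa [zero_smul, add_zero] at this
  have hslope : Tendsto (fun t : ℝ => (Q (a + t • (b - a)) - Q a) / t) (𝓝[>] 0)
      (𝓝 ⟪gradient Q a, b - a⟫) := by
    simpa only [zero_add, zero_smul, add_zero, smul_eq_mul, inv_mul_eq_div] using
      hderiv.tendsto_slope_zero_right
  have hlim := hslope.add <| tendsto_nhdsWithin_of_tendsto_nhds <|
    (by fun_prop : Continuous fun t : ℝ => (1 - t) * (m / 2 * ‖b - a‖ ^ 2)).tendsto' 0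
      (m / 2 * ‖b - a‖ ^ 2) (by simp)
  have hbound : ∀ᶠ t in 𝓝[>] (0 : ℝ), (Q (a + t • (b - a)) - Q a) / t
      + (1 - t) * (m / 2 * ‖b - a‖ ^ 2) ≤ Q b - Q a := by
    filter_upwards [Ioc_mem_nhdsGT one_pos] with t ht using hQ.slope_add_le a b ht.1 ht.2
  linarith [le_of_tendsto hlim hbound]

lemma Differentiable.le_add_inner_gradient_add_of_lipschitz_gradient {f : E → ℝ} {L : ℝ}
    (hf : Differentiable ℝ f) (hlip : ∀ a b, ‖gradient f a - gradient f b‖ ≤ L * ‖a - b‖)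
    (a b : E) :
    f b ≤ f a + ⟪gradient f a, b - a⟫ + L / 2 * ‖b - a‖ ^ 2 := by
  set d := b - a
  set φ : ℝ → ℝ := fun t => f (a + t • d) - t * ⟪gradient f a, d⟫ - L / 2 * t ^ 2 * ‖d‖ ^ 2
  have hφ : ∀ t, HasDerivAt φ
      (⟪gradient f (a + t • d), d⟫ - ⟪gradient f a, d⟫ - L * t * ‖d‖ ^ 2) t := by
    intro t
    have := (((hf (a + t • d)).hasDerivAt_comp_add_smul).sub
      ((hasDerivAt_id t).mul_const ⟪gradient f a, d⟫)).sub
      (((hasDerivAt_pow 2 t).const_mul (L / 2)).mul_const (‖d‖ ^ 2))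
    exact this.congr_deriv (by simp only [Nat.cast_ofNat]; ring)
  have hφ' : ∀ t ∈ interior (Set.Icc (0 : ℝ) 1),
      ⟪gradient f (a + t • d), d⟫ - ⟪gradient f a, d⟫ - L * t * ‖d‖ ^ 2 ≤ 0 := by
    intro t ht
    rw [interior_Icc] at ht
    suffices ⟪gradient f (a + t • d), d⟫ - ⟪gradient f a, d⟫ ≤ L * t * ‖d‖ ^ 2 by linarith
    calc ⟪gradient f (a + t • d), d⟫ - ⟪gradient f a, d⟫
        = ⟪gradient f (a + t • d) - gradient f a, d⟫ := (inner_sub_left _ _ _).symm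
      _ ≤ ‖gradient f (a + t • d) - gradient f a‖ * ‖d‖ := real_inner_le_norm _ _
      _ ≤ L * ‖a + t • d - a‖ * ‖d‖ := by gcongr; exact hlip _ _
      _ = L * t * ‖d‖ ^ 2 := by
          rw [add_sub_cancel_left, norm_smul, Real.norm_of_nonneg ht.1.le]; ring
  have hanti : AntitoneOn φ (Set.Icc 0 1) :=
    antitoneOn_of_hasDerivWithinAt_nonpos (convex_Icc 0 1)
      (fun t _ => (hφ t).continuousAt.continuousWithinAt)
      (fun t _ => (hφ t).hasDerivWithinAt) hφ'
  have := hanti (Set.left_mem_Icc.2 zero_le_one) (Set.right_mem_Icc.2 zero_le_one) zero_le_one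
  simp only [φ, zero_smul, add_zero, one_smul, zero_mul, sub_zero, one_mul, one_pow] at this
  rw [show a + d = b by simp [d]] at this
  linarith

end InnerProductSpace

lemma Real.rpow_le_rpow_add_mul_sub_of_le_one {p x y : ℝ} (hp₀ : 0 ≤ p) (hp₁ : p ≤ 1)
    (hx : 0 ≤ x) (hy : 0 < y) : x ^ p ≤ y ^ p + p * y ^ (p - 1) * (x - y) := by
  have h := rpow_one_add_le_one_add_mul_self (s := x / y - 1)
    (by linarith [div_nonneg hx hy.le]) hp₀ hp₁
  rw [add_sub_cancel, Real.div_rpow hx hy.le, div_le_iff₀ (by positivity)] at h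
  rw [Real.rpow_sub_one hy.ne']
  calc x ^ p ≤ (1 + p * (x / y - 1)) * y ^ p := h
    _ = y ^ p + p * (y ^ p / y) * (x - y) := by field_simp

lemma convexOn_sum_mul_abs {ι : Type*} [Fintype ι] {c : ι → ℝ} (hc : ∀ i, 0 ≤ c i) :
    ConvexOn ℝ Set.univ fun z : EuclideanSpace ℝ ι => ∑ i, c i * |z i| := by
  refine ⟨convex_univ, fun x _ y _ a b ha hb _ => ?_⟩
  simp only [smul_eq_mul, Finset.mul_sum, ← Finset.sum_add_distrib]
  refine Finset.sum_le_sum fun i _ => ?_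
  have habs : |a * x i + b * y i| ≤ a * |x i| + b * |y i| := by
    simpa [abs_mul, abs_of_nonneg ha, abs_of_nonneg hb] using abs_add_le (a * x i) (b * y i)
  calc c i * |(a • x + b • y) i| = c i * |a * x i + b * y i| := by simp
    _ ≤ c i * (a * |x i| + b * |y i|) := mul_le_mul_of_nonneg_left habs (hc i)
    _ = a * (c i * |x i|) + b * (c i * |y i|) := by ring

lemma wfun_nonneg {p t s : ℝ} (hp : 0 ≤ p) (hs : 0 ≤ s) : 0 ≤ wfun p t s :=
  mul_nonneg hp (Real.rpow_nonneg (by positivity) _)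

namespace IRL1

variable {n : ℕ} (S : IRL1 n)

lemma eps_succ_le (k : ℕ) (i : Fin n) : S.eps (k + 1) i ≤ S.eps k i :=
  (S.heps_dec k i).trans (mul_le_of_le_one_left (S.heps_pos k i).le S.hmu1.le)

lemma strongConvexOn_G (k : ℕ) : StrongConvexOn Set.univ S.M (S.G k) := by
  have hpen := (convexOn_sum_mul_abs fun i => wfun_nonneg (t := S.x k i) S.hp0.le
    (S.heps_pos k i).le).smul S.hlam.le
  refine strongConvexOn_iff_convex.2 (((S.hQ_sconv k).add hpen).congr fun z _ => ?_)
  simp only [G, Pi.add_apply, smul_eq_mul]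
  ring

lemma G_succ_add_le (k : ℕ) :
    S.G k (S.x (k + 1)) + S.M / 2 * ‖S.x (k + 1) - S.x k‖ ^ 2 ≤ S.G k (S.x k) := by
  rw [norm_sub_rev]
  exact (S.strongConvexOn_G k).add_sq_norm_sub_le_of_isMinOn
    (isMinOn_univ_iff.2 (S.hmin k)) (S.x k)

lemma sum_rpow_succ_le (k : ℕ) :
    ∑ i, (|S.x (k + 1) i| + S.eps (k + 1) i) ^ S.p ≤ ∑ i, (|S.x k i| + S.eps k i) ^ S.p
      + ∑ i, wfun S.p (S.x k i) (S.eps k i) * (|S.x (k + 1) i| - |S.x k i|) := by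
  rw [← Finset.sum_add_distrib]
  refine Finset.sum_le_sum fun i _ => ?_
  have hy : 0 < |S.x k i| + S.eps k i := by positivity [S.heps_pos k i]
  calc (|S.x (k + 1) i| + S.eps (k + 1) i) ^ S.p
      ≤ (|S.x k i| + S.eps k i) ^ S.p + wfun S.p (S.x k i) (S.eps k i)
          * ((|S.x (k + 1) i| + S.eps (k + 1) i) - (|S.x k i| + S.eps k i)) :=
        Real.rpow_le_rpow_add_mul_sub_of_le_one S.hp0.le S.hp1.le
          (by positivity [S.heps_pos (k + 1) i]) hy
    _ ≤ _ := add_le_add le_rfl (mul_le_mul_of_nonneg_left (by linarith [S.eps_succ_le k i])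
        (wfun_nonneg S.hp0.le (S.heps_pos k i).le))

lemma Feps_succ_add_le (k : ℕ) :
    S.Feps (S.x (k + 1)) (S.eps (k + 1)) + (S.M - S.Lf / 2) * ‖S.x (k + 1) - S.x k‖ ^ 2
      ≤ S.Feps (S.x k) (S.eps k) := by
  have hdescent := S.hf_diff.le_add_inner_gradient_add_of_lipschitz_gradient S.hf_lip
    (S.x k) (S.x (k + 1))
  have hsupport := (strongConvexOn_iff_convex.2 (S.hQ_sconv k)).inner_gradient_le
    (S.hQ_diff k (S.x k)) (S.x (k + 1))
  rw [S.hQ_grad k] at hsupport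
  have hG := S.G_succ_add_le k
  have hpen := mul_le_mul_of_nonneg_left (S.sum_rpow_succ_le k) S.hlam.le
  simp only [mul_sub, Finset.sum_sub_distrib, mul_add] at hpen
  simp only [G] at hG
  simp only [Feps]
  linarith

lemma sum_sq_le_Feps_sub (k : ℕ) :
    (S.M - S.Lf / 2) * ∑ t ∈ Finset.range k, ‖S.x (t + 1) - S.x t‖ ^ 2
      ≤ S.Feps (S.x 0) (S.eps 0) - S.Feps (S.x k) (S.eps k) := by
  induction k with
  | zero => simp
  | succ k ih =>
    rw [Finset.sum_range_succ, mul_add]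
    linarith [S.Feps_succ_add_le k]

lemma Feps_le_Feps_zero (k : ℕ) : S.Feps (S.x k) (S.eps k) ≤ S.Feps (S.x 0) (S.eps 0) := by
  have hsum : 0 ≤ ∑ t ∈ Finset.range k, ‖S.x (t + 1) - S.x t‖ ^ 2 :=
    Finset.sum_nonneg fun _ _ => sq_nonneg _
  linarith [S.sum_sq_le_Feps_sub k, mul_nonneg (by linarith [S.hM] : 0 ≤ S.M - S.Lf / 2) hsum]

lemma f_le_Fobj (z : EuclideanSpace ℝ (Fin n)) : S.f z ≤ S.Fobj z :=
  le_add_of_nonneg_right <| mul_nonneg S.hlam.le <|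
    Finset.sum_nonneg fun _ _ => Real.rpow_nonneg (abs_nonneg _) _

lemma Fobj_le_Feps (z : EuclideanSpace ℝ (Fin n)) {e : Fin n → ℝ} (he : ∀ i, 0 ≤ e i) :
    S.Fobj z ≤ S.Feps z e :=
  add_le_add le_rfl (mul_le_mul_of_nonneg_left (Finset.sum_le_sum fun i _ =>
    Real.rpow_le_rpow (abs_nonneg _) (le_add_of_nonneg_right (he i)) S.hp0.le) S.hlam.le)

end IRL1

lemma IRL1.LevelBounded.bddBelow_Feps {n : ℕ} {S : IRL1 n} (hbdd : S.LevelBounded) :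
    BddBelow (Set.range fun k => S.Feps (S.x k) (S.eps k)) := by
  obtain ⟨c, hc⟩ := hbdd.isCompact_closure.bddBelow_image S.hf_diff.continuous.continuousOn
  refine ⟨c, ?_⟩
  rintro _ ⟨k, rfl⟩
  have hFobj : S.Fobj (S.x k) ≤ S.Feps (S.x k) (S.eps k) :=
    S.Fobj_le_Feps _ fun i => (S.heps_pos k i).le
  have hmem : S.x k ∈ closure {z | S.Fobj z ≤ S.Feps (S.x 0) (S.eps 0)} :=
    subset_closure (hFobj.trans (S.Feps_le_Feps_zero k))
  exact (hc ⟨S.x k, hmem, rfl⟩).trans ((S.f_le_Fobj _).trans hFobj)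

/-- In the IRL1 setting with bounded level set, for every `k`,
`F(x⁰, ε⁰) - F(x^k, ε^k) ≥ (M - Lf/2) Σ_{t<k} ‖x^{t+1} - x^t‖²`, the series
`Σ ‖x^{t+1} - x^t‖²` converges, and `‖x^{k+1} - x^k‖ → 0`. -/
theorem stmt5 {n : ℕ} (S : IRL1 n) (hbdd : S.LevelBounded) :
    (∀ k : ℕ,
      S.Feps (S.x 0) (S.eps 0) - S.Feps (S.x k) (S.eps k) ≥
        (S.M - S.Lf / 2) * ∑ t ∈ Finset.range k, ‖S.x (t + 1) - S.x t‖ ^ 2) ∧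
    Summable (fun t : ℕ => ‖S.x (t + 1) - S.x t‖ ^ 2) ∧
    Tendsto (fun k : ℕ => ‖S.x (k + 1) - S.x k‖) atTop (nhds 0) := by
  have hC : 0 < S.M - S.Lf / 2 := by linarith [S.hM]
  obtain ⟨c, hc⟩ := hbdd.bddBelow_Feps
  have hsum : Summable fun t : ℕ => ‖S.x (t + 1) - S.x t‖ ^ 2 :=
    summable_of_sum_range_le (fun _ => sq_nonneg _) fun k =>
      (le_div_iff₀' hC).2 <| (S.sum_sq_le_Feps_sub k).trans <|
        sub_le_sub_left (hc ⟨k, rfl⟩) _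
  refine ⟨S.sum_sq_le_Feps_sub, hsum, ?_⟩
  simpa [Real.sqrt_sq (norm_nonneg _)] using hsum.tendsto_atTop_zero.sqrt
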